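/- Suppose 0 ≤ h < a, Γ is an (n,h) subset of an open set Ω ⊆ ℝ^(n+1), r > 0, x₀ ∈ ℝⁿ, ψ : ℝⁿ → ℝ is continuous, C² on the annulus {x : r/16 < |x-x₀| < r}, and satisfies: (i) the trace of the second fundamental form of Σ(ψ) against the upward unit normal is < -h(1+|∇ψ|²)^(1/2) at every point over the annulus, (ii) there exists t with 0 < t ≤ M such that ψ + t touches Γ̄ from above, and (iii) Σ(ψ+t) ∩ Γ ⊆ 𝒞_r(x₀). Then the touching set satisfies Σ(ψ+t) ∩ Γ ∩ (𝒞_r(x₀) ∖ closure(𝒞_{r/16}(x₀))) = ∅; i.e., all touching points lie over the closed ball B^n(x₀, r/16). -/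

import Mathlib

open MeasureTheory Metric Set Filter
open scoped RealInnerProductSpace ENNReal NNReal Topology

noncomputable section

/-- `n`-dimensional Euclidean space. -/
abbrev Eu (n : ℕ) := EuclideanSpace ℝ (Fin n)

/-- Append a last coordinate: `(x, t) ∈ ℝⁿ × ℝ ≅ ℝ^(n+1)`. -/
def snoc' {n : ℕ} (x : Eu n) (t : ℝ) : Eu (n+1) :=
  WithLp.toLp 2 (Fin.snoc (α := fun _ => ℝ) (fun i => x i) t)

/-- The first `n` coordinates `z'` of `z ∈ ℝ^(n+1)`. -/
def tail' {n : ℕ} (z : Eu (n+1)) : Eu n := WithLp.toLp 2 (fun i : Fin n => z i.castSucc)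

/-- The last coordinate `z_{n+1}` of `z ∈ ℝ^(n+1)`. -/
def lastc {n : ℕ} (z : Eu (n+1)) : ℝ := z (Fin.last n)

/-- The graph `Σ(f)` of `f : ℝⁿ → ℝ`. -/
def graphOf {n : ℕ} (f : Eu n → ℝ) : Set (Eu (n+1)) := {z | lastc z = f (tail' z)}

/-- The open supergraph `Σ⁺(f)`. -/
def supergraphOf {n : ℕ} (f : Eu n → ℝ) : Set (Eu (n+1)) := {z | f (tail' z) < lastc z}

/-- The paraboloid of opening `a`, center `x` and height `t`. -/
def par {n : ℕ} (a : ℝ) (x : Eu n) (t : ℝ) : Eu n → ℝ := fun y => a/2 * ‖y - x‖^2 + t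

/-- The upward unit normal `(-g,1)/√(1+|g|²)` associated to the gradient `g`. -/
def upNormal {n : ℕ} (g : Eu n) : Eu (n+1) := (Real.sqrt (1+‖g‖^2))⁻¹ • snoc' (-g) 1

/-- `f` touches the closed set `K` from above. -/
def TouchesFromAbove {n : ℕ} (f : Eu n → ℝ) (K : Set (Eu (n+1))) : Prop :=
  (graphOf f ∩ K).Nonempty ∧ supergraphOf f ∩ K = ∅

/-- The touching set `A_a(Γ; C)`: pairs `(z, η)` where `z` is a touching point of the
paraboloid `P_{a,x}` (opening `a`, center `x ∈ C`) with `Γ̄`, and `η` is the upward unit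
normal to `Σ(P_{a,x})` at `z`. -/
def ASet {n : ℕ} (a : ℝ) (Γ : Set (Eu (n+1))) (C : Set (Eu n)) :
    Set (Eu (n+1) × Eu (n+1)) :=
  {p | ∃ x ∈ C, ∃ t : ℝ, TouchesFromAbove (par a x t) (closure Γ) ∧
    p.1 ∈ graphOf (par a x t) ∩ closure Γ ∧
    p.2 = upNormal (a • (tail' p.1 - x))}

/-- The horizontal projection `A'_a(Γ; C)`. -/
def ASet' {n : ℕ} (a : ℝ) (Γ : Set (Eu (n+1))) (C : Set (Eu n)) : Set (Eu n) :=
  (fun p => tail' p.1) '' ASet a Γ C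

/-- The open cylinder `𝒞₁(0) = U^n(0,1) × ℝ`. -/
def cyl (n : ℕ) : Set (Eu (n+1)) := {z | ‖tail' z‖ < 1}

/-- Sum of the lowest `m` eigenvalues of a symmetric bilinear form (Ky Fan): the infimum
of `∑ B(uᵢ,uᵢ)` over orthonormal families `u : Fin m → E`. -/
def traceLowest (m : ℕ) {E : Type*} [NormedAddCommGroup E] [InnerProductSpace ℝ E]
    (B : E →L[ℝ] E →L[ℝ] ℝ) : ℝ :=
  sInf {s | ∃ u : Fin m → E, Orthonormal ℝ u ∧ s = ∑ i, B (u i) (u i)}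

/-- `Γ` is an `(m,h)` subset of `Ω`: it is relatively closed in `Ω` and for every `x ∈ Γ`
and `C²` function `f` near `x` such that `f|Γ` has a local maximum at `x` and `∇f(x) ≠ 0`,
the sum of the lowest `m` eigenvalues of `Hess f(x)` is at most `h|∇f(x)|`. -/
def IsMH {n : ℕ} (m : ℕ) (h : ℝ) (Ω Γ : Set (Eu (n+1))) : Prop :=
  Γ ⊆ Ω ∧ closure Γ ∩ Ω ⊆ Γ ∧
  ∀ x ∈ Γ, ∀ f : Eu (n+1) → ℝ, (∃ U ∈ 𝓝 x, ContDiffOn ℝ 2 f U) →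
    IsLocalMaxOn f Γ x → gradient f x ≠ 0 →
    traceLowest m (fderiv ℝ (fderiv ℝ f) x) ≤ h * ‖gradient f x‖

/-- Divergence of a vector field on `ℝⁿ`. -/
def divg {n : ℕ} (W : Eu n → Eu n) (x : Eu n) : ℝ :=
  LinearMap.trace ℝ (Eu n) (fderiv ℝ W x : Eu n →ₗ[ℝ] Eu n)

/-- `div(∇ψ/√(1+|∇ψ|²))(x)`, the trace of the second fundamental form of the graph of `ψ`
over `x` with respect to the upward unit normal. -/
def meanCurvGraph {n : ℕ} (ψ : Eu n → ℝ) (x : Eu n) : ℝ :=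
  divg (fun y => (Real.sqrt (1 + ‖gradient ψ y‖^2))⁻¹ • gradient ψ y) x

/-- The `m`-th stratum `Γ^(m)`: points of `Γ` that can be touched from `n+1-m` linearly
independent directions by open balls of `ℝ^(n+1)`. -/
def stratum {n : ℕ} (m : ℕ) (Γ : Set (Eu (n+1))) : Set (Eu (n+1)) :=
  {z ∈ Γ | ∃ v : Fin (n+1-m) → Eu (n+1), LinearIndependent ℝ v ∧
    ∀ i, ‖v i‖ = 1 ∧ ∃ r > (0:ℝ), Metric.ball (z + r • v i) r ∩ Γ = ∅}

/-!
Suppose `z ∈ Γ` lies on `Σ(ψ + t)` over the annulus. The function `u = z_{n+1} - ψ(z') - t` is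
`≤ 0` on `Γ` and vanishes at `z`, so `f = u + c u²` has a local maximum on `Γ` at `z`, with
`∇f(z) = ν = (-∇ψ, 1)`. The Hessian of `f` at `z` is `-D²ψ` on horizontal directions plus the
penalty `2c ⟨ν, ·⟩²`. For `c` large, an orthonormal `n`-frame either pays the penalty or is close to
`ν^⊥`, and the trace of `-D²ψ` over `ν^⊥` is `-|ν|` times the mean curvature of the graph, which by
(i) exceeds `h |ν|`. This contradicts the `(n,h)` property of `Γ`.
-/

open InnerProductSpace

section BilinTrace

variable {E : Type*} [NormedAddCommGroup E] [InnerProductSpace ℝ E]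

lemma apply_self_add_mul_inner_sq_le (B : E →L[ℝ] E →L[ℝ] ℝ) {e w : E} (he : ‖e‖ = 1)
    (hw : ‖w‖ = 1) {K : ℝ} (hK : 0 < K) :
    B w w + K * ⟪e, w⟫ ^ 2 ≤ B e e + K + 2 * ‖B‖ ^ 2 / K := by
  wlog hc : 0 ≤ ⟪e, w⟫ generalizing w
  · simpa [inner_neg_right] using this (w := -w) (by rwa [norm_neg]) (by
      rw [inner_neg_right]; linarith)
  set d := ‖w - e‖
  have hd : d ^ 2 = 2 - 2 * ⟪e, w⟫ := by
    rw [norm_sub_sq_real, hw, he, real_inner_comm]; ring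
  have hc1 : ⟪e, w⟫ ≤ 1 := by simpa [he, hw] using real_inner_le_norm e w
  have hBd : B w w - B e e ≤ 2 * ‖B‖ * d := by
    have hsplit : B w w - B e e = B (w - e) w + B e (w - e) := by
      simp only [map_sub, sub_apply]; ring
    have h1 := (le_abs_self _).trans (B.le_opNorm₂ (w - e) w)
    have h2 := (le_abs_self _).trans (B.le_opNorm₂ e (w - e))
    rw [hw] at h1
    rw [he] at h2
    linarith
  -- AM-GM
  have hamgm : 2 * ‖B‖ * d ≤ K * d ^ 2 / 2 + 2 * ‖B‖ ^ 2 / K := by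
    rw [div_add_div _ _ two_ne_zero hK.ne', le_div_iff₀ (by positivity)]
    nlinarith [sq_nonneg (K * d - 2 * ‖B‖)]
  nlinarith [mul_le_mul_of_nonneg_left (mul_le_of_le_one_left hc hc1) hK.le]

variable [FiniteDimensional ℝ E]

def bilinTrace (B : E →L[ℝ] E →L[ℝ] ℝ) : ℝ :=
  LinearMap.trace ℝ E (continuousLinearMapOfBilin B)

lemma bilinTrace_eq_sum {ι : Type*} [Fintype ι] (B : E →L[ℝ] E →L[ℝ] ℝ)
    (b : OrthonormalBasis ι ℝ E) : bilinTrace B = ∑ i, B (b i) (b i) := by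
  rw [bilinTrace, LinearMap.trace_eq_sum_inner _ b]
  refine Finset.sum_congr rfl fun i _ => ?_
  rw [real_inner_comm]
  exact continuousLinearMapOfBilin_apply B _ _

lemma bilinTrace_neg (B : E →L[ℝ] E →L[ℝ] ℝ) : bilinTrace (-B) = -bilinTrace B := by
  simp [bilinTrace, continuousLinearMapOfBilin]

lemma Orthonormal.exists_sum_add_apply_self_eq_bilinTrace {m : ℕ}
    (hE : Module.finrank ℝ E = m + 1) {u : Fin m → E} (hu : Orthonormal ℝ u)
    (B : E →L[ℝ] E →L[ℝ] ℝ) :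
    ∃ w : E, ‖w‖ = 1 ∧ ∑ i, B (u i) (u i) + B w w = bilinTrace B := by
  set v : Fin (m + 1) → E := Fin.snoc u 0
  let e := Equiv.ofInjective _ (Fin.castSucc_injective m)
  have hres : (range Fin.castSucc).domRestrict v = u ∘ e.symm := by
    ext1 ⟨_, i, rfl⟩
    simp [v, e, Equiv.ofInjective_symm_apply]
  obtain ⟨b, hb⟩ := Orthonormal.exists_orthonormalBasis_extension_of_card_eq
    (by simpa using hE) (hres ▸ hu.comp _ e.symm.injective)
  refine ⟨b (Fin.last m), b.orthonormal.1 _, ?_⟩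
  rw [bilinTrace_eq_sum B b, Fin.sum_univ_castSucc]
  congr 1
  refine Finset.sum_congr rfl fun i _ => ?_
  rw [hb _ ⟨i, rfl⟩]
  simp [v]

lemma le_traceLowest_of_eq_add_mul_inner {m : ℕ} (hE : Module.finrank ℝ E = m + 1)
    (B₀ B : E →L[ℝ] E →L[ℝ] ℝ) {e : E} (he : ‖e‖ = 1) {K : ℝ} (hK : 0 < K)
    (hB : ∀ v w, B v w = B₀ v w + K * (⟪e, v⟫ * ⟪e, w⟫)) :
    bilinTrace B₀ - B₀ e e - 2 * ‖B₀‖ ^ 2 / K ≤ traceLowest m B := by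
  let b := (stdOrthonormalBasis ℝ E).reindex (finCongr hE)
  have htr : bilinTrace B = bilinTrace B₀ + K := by
    have := b.sum_inner_mul_inner e e
    simp only [bilinTrace_eq_sum _ b, hB, Finset.sum_add_distrib, ← Finset.mul_sum,
      real_inner_comm (b _) e] at this ⊢
    rw [this, real_inner_self_eq_norm_sq, he]; ring
  refine le_csInf ⟨_, _, b.orthonormal.comp _ (Fin.castSucc_injective m), rfl⟩ ?_
  rintro _ ⟨u, hu, rfl⟩
  obtain ⟨w, hw, hsum⟩ := hu.exists_sum_add_apply_self_eq_bilinTrace hE B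
  have := apply_self_add_mul_inner_sq_le B₀ he hw hK
  rw [hB, htr, ← sq] at hsum
  linarith

end BilinTrace

lemma isLocalMaxOn_add_mul_sq {X : Type*} [TopologicalSpace X] {u : X → ℝ} {s : Set X} {z : X}
    (hu : ContinuousAt u z) (hle : ∀ w ∈ s, u w ≤ 0) (hz : u z = 0) (c : ℝ) :
    IsLocalMaxOn (fun w => u w + c * u w ^ 2) s z := by
  have hpos : ∀ᶠ w in 𝓝 z, -1 < c * u w :=
    continuousAt_const.eventually_lt (hu.const_mul c) (by simp [hz])
  filter_upwards [nhdsWithin_le_nhds hpos, self_mem_nhdsWithin] with w h1 h2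
  simp only [hz]
  nlinarith [hle w h2]

section Calculus

variable {F : Type*} [NormedAddCommGroup F] [NormedSpace ℝ F]

lemma hasFDerivAt_add_mul_sq {u : F → ℝ} {y : F} (hu : DifferentiableAt ℝ u y) (c : ℝ) :
    HasFDerivAt (fun w => u w + c * u w ^ 2) ((1 + 2 * c * u y) • fderiv ℝ u y) y := by
  refine (hu.hasFDerivAt.add ((hu.hasFDerivAt.pow 2).const_mul c)).congr_fderiv ?_
  ext v
  simp only [Nat.add_one_sub_one, pow_one, nsmul_eq_mul, Nat.cast_ofNat, add_apply, smul_apply,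
    smul_eq_mul]
  ring

variable {u : F → ℝ} {z : F}

lemma fderiv_add_mul_sq (hu : DifferentiableAt ℝ u z) (hz : u z = 0) (c : ℝ) :
    fderiv ℝ (fun w => u w + c * u w ^ 2) z = fderiv ℝ u z := by
  simp [(hasFDerivAt_add_mul_sq hu c).fderiv, hz]

lemma fderiv_fderiv_add_mul_sq (hu : ContDiffAt ℝ 2 u z) (hz : u z = 0) (c : ℝ) (v w : F) :
    fderiv ℝ (fderiv ℝ fun w => u w + c * u w ^ 2) z v w
      = fderiv ℝ (fderiv ℝ u) z v w + 2 * c * (fderiv ℝ u z v * fderiv ℝ u z w) := by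
  have hfd : fderiv ℝ (fun w => u w + c * u w ^ 2)
      =ᶠ[𝓝 z] fun y => (1 + 2 * c * u y) • fderiv ℝ u y :=
    (hu.eventually (by simp)).mono fun y hy =>
      (hasFDerivAt_add_mul_sq (hy.differentiableAt two_ne_zero) c).fderiv
  have hd : HasFDerivAt (fun y => (1 + 2 * c * u y) • fderiv ℝ u y)
      ((1 + 2 * c * u z) • fderiv ℝ (fderiv ℝ u) z
        + ((2 * c) • fderiv ℝ u z).smulRight (fderiv ℝ u z)) z := by
    refine (((hu.differentiableAt two_ne_zero).hasFDerivAt.const_mul (2 * c)).const_add 1).smul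
      ((hu.fderiv_right (m := 1) le_rfl).differentiableAt one_ne_zero).hasFDerivAt
  rw [hfd.fderiv_eq, hd.fderiv]
  simp only [hz, mul_zero, add_zero, one_smul, add_apply, ContinuousLinearMap.smulRight_apply,
    smul_apply, smul_eq_mul, add_right_inj]
  ring

end Calculus

section Coordinates

variable {n : ℕ}

def tailCLM (n : ℕ) : Eu (n+1) →L[ℝ] Eu n where
  toFun := tail'
  map_add' _ _ := rfl
  map_smul' _ _ := rfl
  cont := by unfold tail'; fun_prop

@[simp] lemma tailCLM_apply (z : Eu (n+1)) : tailCLM n z = tail' z := rfl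

lemma tail_snoc (x : Eu n) (t : ℝ) : tail' (snoc' x t) = x := by
  ext i; simp [tail', snoc']

lemma inner_snoc (x : Eu n) (t : ℝ) (w : Eu (n+1)) :
    ⟪snoc' x t, w⟫ = ⟪x, tail' w⟫ + t * lastc w := by
  simp [PiLp.inner_apply, Fin.sum_univ_castSucc, snoc', tail', lastc, mul_comm]

lemma norm_snoc_sq (x : Eu n) (t : ℝ) : ‖snoc' x t‖ ^ 2 = ‖x‖ ^ 2 + t ^ 2 := by
  rw [← real_inner_self_eq_norm_sq, inner_snoc, tail_snoc, real_inner_self_eq_norm_sq]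
  simp [lastc, snoc', sq]

lemma bilinTrace_bilinearComp_tailCLM (B : Eu n →L[ℝ] Eu n →L[ℝ] ℝ) :
    bilinTrace (B.bilinearComp (tailCLM n) (tailCLM n)) = bilinTrace B := by
  have hcast (i : Fin n) : tail' (EuclideanSpace.single i.castSucc (1 : ℝ))
      = EuclideanSpace.single i 1 := by
    ext j; simp [tail']
  have hlast : tail' (EuclideanSpace.single (Fin.last n) (1 : ℝ)) = 0 := by
    ext j; simp [tail']
  rw [bilinTrace_eq_sum _ (EuclideanSpace.basisFun _ ℝ),
    bilinTrace_eq_sum _ (EuclideanSpace.basisFun _ ℝ), Fin.sum_univ_castSucc]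
  simp [hcast, hlast]

end Coordinates

lemma hasFDerivAt_gradient {E : Type*} [NormedAddCommGroup E] [InnerProductSpace ℝ E]
    [CompleteSpace E] {ψ : E → ℝ} {x : E} (hψ : ContDiffAt ℝ 2 ψ x) :
    HasFDerivAt (gradient ψ) (continuousLinearMapOfBilin (fderiv ℝ (fderiv ℝ ψ) x)) x :=
  (toDual ℝ E).symm.toContinuousLinearEquiv.hasFDerivAt.comp x
    ((hψ.fderiv_right (m := 1) le_rfl).differentiableAt one_ne_zero).hasFDerivAt

lemma meanCurvGraph_eq {n : ℕ} {ψ : Eu n → ℝ} {x : Eu n} (hψ : ContDiffAt ℝ 2 ψ x) :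
    meanCurvGraph ψ x = (bilinTrace (fderiv ℝ (fderiv ℝ ψ) x)
      - fderiv ℝ (fderiv ℝ ψ) x (gradient ψ x) (gradient ψ x) / (1 + ‖gradient ψ x‖ ^ 2))
      / √(1 + ‖gradient ψ x‖ ^ 2) := by
  have hG := hasFDerivAt_gradient hψ
  have hq : 0 < 1 + ‖gradient ψ x‖ ^ 2 := by positivity
  have hs : 0 < √(1 + ‖gradient ψ x‖ ^ 2) := Real.sqrt_pos.2 hq
  have hφ := (hasDerivAt_inv hs.ne').comp_hasFDerivAt x ((hG.norm_sq.const_add 1).sqrt hq.ne')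
  have hW : HasFDerivAt (fun y => (√(1 + ‖gradient ψ y‖ ^ 2))⁻¹ • gradient ψ y) _ x :=
    hφ.smul hG
  have hHg : fderiv ℝ ψ x (continuousLinearMapOfBilin (fderiv ℝ (fderiv ℝ ψ) x) (gradient ψ x))
      = fderiv ℝ (fderiv ℝ ψ) x (gradient ψ x) (gradient ψ x) := by
    rw [← toDual_symm_apply, real_inner_comm, continuousLinearMapOfBilin_apply]; rfl
  rw [meanCurvGraph, divg, hW.fderiv]
  simp only [Function.comp_apply, Real.sq_sqrt hq.le, one_div, mul_inv_rev, neg_smul,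
    ContinuousLinearMap.toLinearMap_add, ContinuousLinearMap.toLinearMap_smul,
    ContinuousLinearMap.coe_smulRight, ContinuousLinearMap.toLinearMap_neg,
    ContinuousLinearMap.toLinearMap_comp, ContinuousLinearMap.toLinearMap_innerSL_apply, map_add,
    map_smul, smul_eq_mul, LinearMap.trace_smulRight, LinearMap.neg_apply, LinearMap.smul_apply,
    LinearMap.coe_comp, coe_innerₛₗ_apply, inner_gradient_left, ContinuousLinearMap.coe_coe, hHg,
    nsmul_eq_mul, Nat.cast_ofNat, bilinTrace]
  field_simp
  ring

section Graph

variable {n : ℕ} {ψ : Eu n → ℝ}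

lemma norm_upNormal (g : Eu n) : ‖upNormal g‖ = 1 := by
  have hs : 0 < √(1 + ‖g‖ ^ 2) := by positivity
  have hν : ‖snoc' (-g) 1‖ = √(1 + ‖g‖ ^ 2) := by
    rw [← Real.sqrt_sq (norm_nonneg _), norm_snoc_sq, norm_neg, one_pow, add_comm]
  rw [upNormal, norm_smul, hν, norm_inv, Real.norm_of_nonneg hs.le, inv_mul_cancel₀ hs.ne']

lemma bilinTrace_sub_apply_upNormal {x : Eu n} (hψ : ContDiffAt ℝ 2 ψ x) :
    bilinTrace (-(fderiv ℝ (fderiv ℝ ψ) x).bilinearComp (tailCLM n) (tailCLM n))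
      - (-(fderiv ℝ (fderiv ℝ ψ) x).bilinearComp (tailCLM n) (tailCLM n))
        (upNormal (gradient ψ x)) (upNormal (gradient ψ x))
      = -√(1 + ‖gradient ψ x‖ ^ 2) * meanCurvGraph ψ x := by
  have hq : 0 < 1 + ‖gradient ψ x‖ ^ 2 := by positivity
  rw [meanCurvGraph_eq hψ]
  simp only [bilinTrace_neg, bilinTrace_bilinearComp_tailCLM, upNormal, map_smul, neg_apply,
    smul_neg, smul_apply, ContinuousLinearMap.bilinearComp_apply, tailCLM_apply, tail_snoc, map_neg,
    neg_neg, smul_eq_mul, mul_neg, sub_neg_eq_add, neg_mul]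
  field_simp
  rw [Real.sq_sqrt hq.le]
  ring

variable {z : Eu (n+1)}

lemma hasFDerivAt_lastc_sub_comp_tail (hψ : DifferentiableAt ℝ ψ (tail' z)) (t : ℝ) :
    HasFDerivAt (fun w => lastc w - ψ (tail' w) - t)
      (EuclideanSpace.proj (Fin.last n) - (fderiv ℝ ψ (tail' z)).comp (tailCLM n)) z :=
  ((EuclideanSpace.proj (Fin.last n)).hasFDerivAt.sub
    (hψ.hasFDerivAt.comp z (tailCLM n).hasFDerivAt)).sub_const t

lemma fderiv_lastc_sub_comp_tail_apply (hψ : DifferentiableAt ℝ ψ (tail' z)) (t : ℝ)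
    (v : Eu (n+1)) :
    fderiv ℝ (fun w => lastc w - ψ (tail' w) - t) z v
      = √(1 + ‖gradient ψ (tail' z)‖ ^ 2) * ⟪upNormal (gradient ψ (tail' z)), v⟫ := by
  rw [(hasFDerivAt_lastc_sub_comp_tail hψ t).fderiv, upNormal, real_inner_smul_left,
    inner_snoc, inner_neg_left, gradient, toDual_symm_apply, mul_inv_cancel_left₀ (by positivity)]
  simp only [sub_apply, PiLp.proj_apply, ContinuousLinearMap.comp_apply, tailCLM_apply, lastc,
    one_mul]
  ring

lemma fderiv_fderiv_lastc_sub_comp_tail (hψ : ContDiffAt ℝ 2 ψ (tail' z)) (t : ℝ)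
    (v w : Eu (n+1)) :
    fderiv ℝ (fderiv ℝ fun w => lastc w - ψ (tail' w) - t) z v w
      = -fderiv ℝ (fderiv ℝ ψ) (tail' z) (tail' v) (tail' w) := by
  have hev : fderiv ℝ (fun w => lastc w - ψ (tail' w) - t) =ᶠ[𝓝 z] fun y =>
      EuclideanSpace.proj (Fin.last n) - (fderiv ℝ ψ (tail' y)).comp (tailCLM n) :=
    (((tailCLM n).continuous.tendsto z).eventually (hψ.eventually (by simp))).mono fun y hy =>
      (hasFDerivAt_lastc_sub_comp_tail (hy.differentiableAt two_ne_zero) t).fderiv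
  have h1 : HasFDerivAt (fderiv ℝ ψ) (fderiv ℝ (fderiv ℝ ψ) (tail' z)) (tail' z) :=
    ((hψ.fderiv_right le_rfl).differentiableAt one_ne_zero).hasFDerivAt
  have h2 : HasFDerivAt (fun y => (fderiv ℝ ψ (tail' y)).comp (tailCLM n)) _ z :=
    (h1.comp (f := tailCLM n) z (tailCLM n).hasFDerivAt).clm_comp (hasFDerivAt_const _ z)
  rw [hev.fderiv_eq, fderiv_const_sub, h2.fderiv]
  simp

lemma TouchesFromAbove.lastc_le {f : Eu n → ℝ} {K : Set (Eu (n+1))} (hf : TouchesFromAbove f K)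
    {w : Eu (n+1)} (hw : w ∈ K) : lastc w ≤ f (tail' w) :=
  not_lt.1 fun hlt => hf.2.subset ⟨hlt, hw⟩

lemma exists_penalized_test_function {S : Set (Eu (n+1))} {t : ℝ}
    (hψ : ContDiffAt ℝ 2 ψ (tail' z)) (hz : lastc z = ψ (tail' z) + t)
    (hle : ∀ w ∈ S, lastc w ≤ ψ (tail' w) + t) (K : ℝ) :
    ∃ f : Eu (n+1) → ℝ, (∃ U ∈ 𝓝 z, ContDiffOn ℝ 2 f U) ∧ IsLocalMaxOn f S z ∧
      gradient f z = √(1 + ‖gradient ψ (tail' z)‖ ^ 2) • upNormal (gradient ψ (tail' z)) ∧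
      ∀ v w, fderiv ℝ (fderiv ℝ f) z v w = -fderiv ℝ (fderiv ℝ ψ) (tail' z) (tail' v) (tail' w)
        + K * (⟪upNormal (gradient ψ (tail' z)), v⟫ * ⟪upNormal (gradient ψ (tail' z)), w⟫) := by
  set u := fun w => lastc w - ψ (tail' w) - t
  have hu : ContDiffAt ℝ 2 u z :=
    ((EuclideanSpace.proj (Fin.last n)).contDiff.contDiffAt.sub
      (hψ.comp (f := tailCLM n) z (tailCLM n).contDiff.contDiffAt)).sub contDiffAt_const
  have huz : u z = 0 := by simp [u, hz]
  have hDu := fderiv_lastc_sub_comp_tail_apply (hψ.differentiableAt two_ne_zero) t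
  -- `Du = |ν| ⟨upNormal, ·⟩`, so `c = K / (2 |ν|²)` makes `2c Du ⊗ Du = K upNormal ⊗ upNormal`
  refine ⟨fun w => u w + K / (2 * (1 + ‖gradient ψ (tail' z)‖ ^ 2)) * u w ^ 2,
    (hu.add (contDiffAt_const.mul (hu.pow 2))).contDiffOn le_rfl (by simp),
    isLocalMaxOn_add_mul_sq hu.continuousAt
      (fun w hw => sub_nonpos.2 (sub_le_iff_le_add'.2 (hle w hw))) huz _,
    ext_inner_right ℝ fun v => ?_, fun v w => ?_⟩
  · rw [gradient, toDual_symm_apply, fderiv_add_mul_sq (hu.differentiableAt two_ne_zero) huz,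
      hDu, real_inner_smul_left]
  · rw [fderiv_fderiv_add_mul_sq hu huz, fderiv_fderiv_lastc_sub_comp_tail hψ, hDu, hDu]
    field_simp
    rw [Real.sq_sqrt (by positivity)]
    ring

end Graph

theorem stmt19_general (n : ℕ) (h : ℝ) (hh : 0 ≤ h)
    (Ω Γ : Set (Eu (n+1))) (hΓ : IsMH n h Ω Γ)
    (r : ℝ) (x₀ : Eu n) (ψ : Eu n → ℝ)
    (hψ2 : ContDiffOn ℝ 2 ψ {x | r/16 < ‖x - x₀‖ ∧ ‖x - x₀‖ < r})
    (hbarrier : ∀ x, r/16 < ‖x - x₀‖ → ‖x - x₀‖ < r →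
      meanCurvGraph ψ x < -h * Real.sqrt (1 + ‖gradient ψ x‖^2))
    (t : ℝ)
    (htouch : TouchesFromAbove (fun x => ψ x + t) (closure Γ)) :
    graphOf (fun x => ψ x + t) ∩ Γ ∩
      ({z | ‖tail' z - x₀‖ < r} \ {z | ‖tail' z - x₀‖ ≤ r/16}) = ∅ := by
  refine eq_empty_iff_forall_notMem.2 fun z ⟨⟨hzg, hzΓ⟩, hzr, hzr'⟩ => ?_
  replace hzr' : r / 16 < ‖tail' z - x₀‖ := not_le.1 hzr'
  have hannulus : IsOpen {x : Eu n | r/16 < ‖x - x₀‖ ∧ ‖x - x₀‖ < r} := by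
    have hd : Continuous fun x : Eu n => ‖x - x₀‖ := by fun_prop
    exact (isOpen_lt continuous_const hd).inter (isOpen_lt hd continuous_const)
  have hψ : ContDiffAt ℝ 2 ψ (tail' z) := hψ2.contDiffAt (hannulus.mem_nhds ⟨hzr', hzr⟩)
  set g := gradient ψ (tail' z)
  set s := √(1 + ‖g‖ ^ 2)
  set B₀ := -(fderiv ℝ (fderiv ℝ ψ) (tail' z)).bilinearComp (tailCLM n) (tailCLM n)
  have hgap : h * s < bilinTrace B₀ - B₀ (upNormal g) (upNormal g) := by
    have hmc : s * meanCurvGraph ψ (tail' z) < s * (-h * s) :=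
      mul_lt_mul_of_pos_left (hbarrier _ hzr' hzr) (by positivity)
    have hhs : h * s ≤ h * s * s := le_mul_of_one_le_right (by positivity) (by simp [s])
    rw [bilinTrace_sub_apply_upNormal hψ]
    linarith
  obtain ⟨K, hKgap, hK⟩ : ∃ K : ℝ,
      2 * ‖B₀‖ ^ 2 / K < bilinTrace B₀ - B₀ (upNormal g) (upNormal g) - h * s ∧ 0 < K :=
    (((tendsto_const_nhds.div_atTop tendsto_id).eventually (gt_mem_nhds (sub_pos.2 hgap))).and
      (eventually_gt_atTop 0)).exists
  obtain ⟨f, hf, hmax, hgrad, hhess⟩ := exists_penalized_test_function hψ hzg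
    (fun w hw => htouch.lastc_le (subset_closure hw)) K
  have hgradn : ‖gradient f z‖ = s := by
    rw [hgrad, norm_smul, norm_upNormal, mul_one, Real.norm_of_nonneg (Real.sqrt_nonneg _)]
  have hupper := hΓ.2.2 z hzΓ f hf hmax (by rw [← norm_ne_zero_iff, hgradn]; positivity)
  have hlower := le_traceLowest_of_eq_add_mul_inner finrank_euclideanSpace_fin B₀ _
    (norm_upNormal g) hK hhess
  rw [hgradn] at hupper
  linarith

/-- Suppose `0 ≤ h < a`, `Γ` is an `(n,h)` subset of an open set
`Ω ⊆ ℝ^(n+1)`, `ψ : ℝⁿ → ℝ` is continuous and `C²` on the annulus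
`{x : r/16 < |x-x₀| < r}`, such that (i) the trace of the second fundamental form of
`Σ(ψ)` against the upward unit normal is `< -h√(1+|∇ψ|²)` over the annulus, (ii) `ψ + t`
touches `Γ̄` from above for some `0 < t ≤ M`, and (iii) `Σ(ψ+t) ∩ Γ ⊆ 𝒞_r(x₀)`. Then
`Σ(ψ+t) ∩ Γ` contains no point lying over the open annulus: all touching points lie over
the closed ball `B^n(x₀, r/16)`. -/
theorem stmt19 (n : ℕ) (hn : 1 ≤ n) (h a : ℝ) (hh : 0 ≤ h) (hha : h < a)
    (Ω Γ : Set (Eu (n+1))) (hΩ : IsOpen Ω) (hΓ : IsMH n h Ω Γ)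
    (r : ℝ) (hr : 0 < r) (x₀ : Eu n) (ψ : Eu n → ℝ) (hψc : Continuous ψ)
    (hψ2 : ContDiffOn ℝ 2 ψ {x | r/16 < ‖x - x₀‖ ∧ ‖x - x₀‖ < r})
    (hbarrier : ∀ x, r/16 < ‖x - x₀‖ → ‖x - x₀‖ < r →
      meanCurvGraph ψ x < -h * Real.sqrt (1 + ‖gradient ψ x‖^2))
    (M t : ℝ) (ht0 : 0 < t) (htM : t ≤ M)
    (htouch : TouchesFromAbove (fun x => ψ x + t) (closure Γ))
    (hloc : graphOf (fun x => ψ x + t) ∩ Γ ⊆ {z | ‖tail' z - x₀‖ < r}) :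
    graphOf (fun x => ψ x + t) ∩ Γ ∩
      ({z | ‖tail' z - x₀‖ < r} \ {z | ‖tail' z - x₀‖ ≤ r/16}) = ∅ :=
  stmt19_general n h hh Ω Γ hΓ r x₀ ψ hψ2 hbarrier t htouch
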